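/- Let X = {x₁,...,x_m} be a Grassmannian frame for R^n with m > n. Then for every j, the set {xᵢ : i ≠ j} spans R^n. -/

import Mathlib

open scoped RealInnerProductSpace
abbrev E (n : ℕ) := EuclideanSpace ℝ (Fin n)
noncomputable def coh {n : ℕ} (X : Set (E n)) : ℝ :=
  sSup {r : ℝ | ∃ x ∈ X, ∃ y ∈ X, x ≠ y ∧ r = |⟪x, y⟫|}
def IsUnitSet {n : ℕ} (X : Set (E n)) : Prop := ∀ x ∈ X, ‖x‖ = 1
def Isolated {n : ℕ} (X : Set (E n)) (x : E n) : Prop :=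
  ∀ y ∈ X, y ≠ x → |⟪x, y⟫| < coh X
def Isolable {n : ℕ} (X : Set (E n)) (x : E n) : Prop :=
  ∀ ε > 0, ∃ x' : E n, ‖x'‖ = 1 ∧ ‖x - x'‖ < ε ∧ ∀ y ∈ X, y ≠ x → |⟪x', y⟫| < coh X
def Grassmannian {n : ℕ} (m : ℕ) (X : Set (E n)) : Prop :=
  IsUnitSet X ∧ X.Finite ∧ X.ncard = m ∧
    ∀ Y : Set (E n), IsUnitSet Y → Y.Finite → Y.ncard = m → coh X ≤ coh Y

/-!
If `S = X \ {x}` does not span, pick a unit vector `v ⊥ S`. Replacing `x` by `v` keeps the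
coherence `≤ c := coh X`, and a small perturbation pushes it strictly below `c`, contradicting
minimality: rotate each `s ∈ S` towards `v` by the angle `2 arctan u_s`. This turns `⟪s, v⟫ = 0`
into `2 u_s / (1 + u_s²)`, which is `< c` once `2 u_s ≤ c`, and it turns `|⟪s, s'⟫| ≤ c` into a
value `< c` as soon as `2 u_s u_s' < c (u_s² + u_s'²)`. Both hold for the geometric choice
`u_s = (c / 2) ^ (k_s + 1)` with distinct exponents `k_s`. Finally `c > 0`, since more than `n`
unit vectors of `ℝⁿ` cannot be pairwise orthogonal.
-/

lemma two_mul_mul_lt_of_two_mul_le {c u u' : ℝ} (hc : 0 < c) (hu : 0 ≤ u) (hu' : 0 < u')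
    (h : 2 * u' ≤ c * u) : 2 * u * u' < c * (u ^ 2 + u' ^ 2) := by
  nlinarith [mul_le_mul_of_nonneg_left h hu, mul_pos hc (pow_pos hu' 2)]

lemma two_mul_pow_mul_pow_lt {c : ℝ} (hc0 : 0 < c) (hc2 : c ≤ 2) {i j : ℕ} (hij : i ≠ j) :
    2 * (c / 2) ^ (i + 1) * (c / 2) ^ (j + 1) <
      c * (((c / 2) ^ (i + 1)) ^ 2 + ((c / 2) ^ (j + 1)) ^ 2) := by
  have key : ∀ {i j : ℕ}, i < j → 2 * (c / 2) ^ (i + 1) * (c / 2) ^ (j + 1) <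
      c * (((c / 2) ^ (i + 1)) ^ 2 + ((c / 2) ^ (j + 1)) ^ 2) := by
    intro i j hlt
    refine two_mul_mul_lt_of_two_mul_le hc0 (by positivity) (by positivity) ?_
    have : (c / 2) ^ (j + 1) ≤ (c / 2) ^ (i + 1 + 1) :=
      pow_le_pow_of_le_one (by positivity) (by linarith) (by omega)
    rw [pow_succ (c / 2) (i + 1)] at this
    linarith
  rcases Nat.lt_or_gt_of_ne hij with h | h
  · exact key h
  · linarith [key h]

section InnerProductSpace

variable {F : Type*} [NormedAddCommGroup F] [InnerProductSpace ℝ F]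

lemma ne_of_abs_inner_lt_one {x y : F} (hx : ‖x‖ = 1) (h : |⟪x, y⟫| < 1) : x ≠ y := by
  rintro rfl
  rw [real_inner_self_eq_norm_sq, hx, one_pow, abs_one] at h
  exact lt_irrefl _ h

lemma exists_norm_eq_one_forall_inner_eq_zero [FiniteDimensional ℝ F] {S : Set F}
    (hS : Submodule.span ℝ S ≠ ⊤) : ∃ v : F, ‖v‖ = 1 ∧ ∀ s ∈ S, ⟪s, v⟫ = 0 := by
  obtain ⟨w, hw, hw0⟩ := Submodule.exists_mem_ne_zero_of_ne_bot
    (mt Submodule.orthogonal_eq_bot_iff.mp hS)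
  refine ⟨‖w‖⁻¹ • w, norm_smul_inv_norm hw0, fun s hs => ?_⟩
  rw [real_inner_smul_right, real_inner_comm,
    (Submodule.mem_orthogonal' _ w).mp hw s (Submodule.subset_span hs), mul_zero]

/-- For unit `s ⊥ v`, the rotation of `s` towards `v` by the angle `2 arctan u`, written with the
rational parametrisation of the circle so that all the estimates stay polynomial in `u`. -/
noncomputable def tilt (v : F) (u : ℝ) (s : F) : F :=
  ((1 - u ^ 2) / (1 + u ^ 2)) • s + (2 * u / (1 + u ^ 2)) • v

variable {v s s' : F}

lemma inner_tilt_tilt (hv : ‖v‖ = 1) (hs : ⟪s, v⟫ = 0) (hs' : ⟪s', v⟫ = 0) (u u' : ℝ) :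
    ⟪tilt v u s, tilt v u' s'⟫ =
      (1 - u ^ 2) / (1 + u ^ 2) * ((1 - u' ^ 2) / (1 + u' ^ 2)) * ⟪s, s'⟫ +
        2 * u / (1 + u ^ 2) * (2 * u' / (1 + u' ^ 2)) := by
  have hvs : ⟪v, s'⟫ = 0 := by rw [real_inner_comm, hs']
  have hvv : ⟪v, v⟫ = 1 := by rw [real_inner_self_eq_norm_sq, hv, one_pow]
  simp only [tilt, inner_add_left, inner_add_right, real_inner_smul_left, real_inner_smul_right,
    hs, hvs, hvv]
  ring

lemma inner_tilt_left (hv : ‖v‖ = 1) (hs : ⟪s, v⟫ = 0) (u : ℝ) :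
    ⟪tilt v u s, v⟫ = 2 * u / (1 + u ^ 2) := by
  have hvv : ⟪v, v⟫ = 1 := by rw [real_inner_self_eq_norm_sq, hv, one_pow]
  simp only [tilt, inner_add_left, real_inner_smul_left, hs, hvv]
  ring

lemma norm_tilt (hv : ‖v‖ = 1) (hs : ⟪s, v⟫ = 0) (hsn : ‖s‖ = 1) (u : ℝ) :
    ‖tilt v u s‖ = 1 := by
  have h : ‖tilt v u s‖ ^ 2 = 1 := by
    rw [← real_inner_self_eq_norm_sq, inner_tilt_tilt hv hs hs, real_inner_self_eq_norm_sq, hsn]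
    field_simp
    ring
  exact (pow_eq_one_iff_of_nonneg (norm_nonneg _) two_ne_zero).mp h

lemma abs_inner_tilt_left_lt (hv : ‖v‖ = 1) (hs : ⟪s, v⟫ = 0) {u c : ℝ} (hu : 0 < u)
    (huc : 2 * u ≤ c) : |⟪tilt v u s, v⟫| < c := by
  rw [inner_tilt_left hv hs, abs_of_pos (by positivity), div_lt_iff₀ (by positivity)]
  nlinarith [pow_pos hu 2]

lemma abs_inner_tilt_tilt_lt (hv : ‖v‖ = 1) (hs : ⟪s, v⟫ = 0) (hs' : ⟪s', v⟫ = 0) {u u' c : ℝ}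
    (hu : 0 ≤ u) (hu1 : u ≤ 1) (hu' : 0 ≤ u') (hu'1 : u' ≤ 1) (hss' : |⟪s, s'⟫| ≤ c)
    (huu' : 2 * u * u' < c * (u ^ 2 + u' ^ 2)) : |⟪tilt v u s, tilt v u' s'⟫| < c := by
  set a := (1 - u ^ 2) / (1 + u ^ 2)
  set a' := (1 - u' ^ 2) / (1 + u' ^ 2)
  have ha : 0 ≤ a := div_nonneg (by nlinarith) (by positivity)
  have ha' : 0 ≤ a' := div_nonneg (by nlinarith) (by positivity)
  rw [inner_tilt_tilt hv hs hs']
  calc |a * a' * ⟪s, s'⟫ + 2 * u / (1 + u ^ 2) * (2 * u' / (1 + u' ^ 2))|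
      ≤ a * a' * c + 2 * u / (1 + u ^ 2) * (2 * u' / (1 + u' ^ 2)) := by
        refine (abs_add_le _ _).trans (add_le_add ?_ (abs_of_nonneg (by positivity)).le)
        rw [abs_mul, abs_of_nonneg (mul_nonneg ha ha')]
        exact mul_le_mul_of_nonneg_left hss' (mul_nonneg ha ha')
    _ < c := by
        simp only [a, a']
        rw [div_mul_div_comm, div_mul_div_comm, div_mul_eq_mul_div, ← add_div,
          div_lt_iff₀ (by positivity)]
        linarith

lemma exists_tilted_family {ι : Type*} [Countable ι] {f : ι → F} {v : F} {c : ℝ} (hc0 : 0 < c)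
    (hc2 : c ≤ 2) (hv : ‖v‖ = 1) (hf : ∀ i, ‖f i‖ = 1) (hfv : ∀ i, ⟪f i, v⟫ = 0)
    (hfc : ∀ i j, i ≠ j → |⟪f i, f j⟫| ≤ c) :
    ∃ g : ι → F, (∀ i, ‖g i‖ = 1) ∧ (∀ i, |⟪g i, v⟫| < c) ∧
      ∀ i j, i ≠ j → |⟪g i, g j⟫| < c := by
  obtain ⟨k, hk⟩ := Countable.exists_injective_nat ι
  set u : ι → ℝ := fun i => (c / 2) ^ (k i + 1)
  have hu0 : ∀ i, 0 < u i := fun i => by positivity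
  have hu : ∀ i, 2 * u i ≤ c := fun i => by
    have : u i ≤ (c / 2) ^ 1 := pow_le_pow_of_le_one (by positivity) (by linarith) (by omega)
    linarith
  refine ⟨fun i => tilt v (u i) (f i), fun i => norm_tilt hv (hfv i) (hf i) _,
    fun i => abs_inner_tilt_left_lt hv (hfv i) (hu0 i) (hu i), fun i j hij => ?_⟩
  refine abs_inner_tilt_tilt_lt hv (hfv i) (hfv j) (hu0 i).le (by linarith [hu i]) (hu0 j).le
    (by linarith [hu j]) (hfc i j hij) ?_
  exact two_mul_pow_mul_pow_lt hc0 hc2 (hk.ne hij)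

end InnerProductSpace

section Coherence

variable {n : ℕ} {X : Set (E n)}

lemma finite_abs_inner_pairs (hX : X.Finite) :
    {r : ℝ | ∃ x ∈ X, ∃ y ∈ X, x ≠ y ∧ r = |⟪x, y⟫|}.Finite := by
  refine ((hX.prod hX).image fun p => |⟪p.1, p.2⟫|).subset ?_
  rintro r ⟨x, hx, y, hy, -, rfl⟩
  exact ⟨(x, y), ⟨hx, hy⟩, rfl⟩

lemma abs_inner_le_coh (hX : X.Finite) {x y : E n} (hx : x ∈ X) (hy : y ∈ X) (hxy : x ≠ y) :
    |⟪x, y⟫| ≤ coh X :=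
  le_csSup (finite_abs_inner_pairs hX).bddAbove ⟨x, hx, y, hy, hxy, rfl⟩

/-- For `X` with fewer than two points `coh X = sSup ∅ = 0`, hence the hypothesis `0 < c`. -/
lemma coh_lt_of_forall_abs_inner_lt (hX : X.Finite) {c : ℝ} (hc : 0 < c)
    (h : ∀ x ∈ X, ∀ y ∈ X, x ≠ y → |⟪x, y⟫| < c) : coh X < c := by
  rcases Set.eq_empty_or_nonempty {r : ℝ | ∃ x ∈ X, ∃ y ∈ X, x ≠ y ∧ r = |⟪x, y⟫|} with he | hne
  · rwa [coh, he, Real.sSup_empty]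
  · rw [coh, (finite_abs_inner_pairs hX).csSup_lt_iff hne]
    rintro r ⟨x, hx, y, hy, hxy, rfl⟩
    exact h x hx y hy hxy

lemma coh_le_one (hX : IsUnitSet X) : coh X ≤ 1 := by
  refine Real.sSup_le ?_ zero_le_one
  rintro r ⟨x, hx, y, hy, -, rfl⟩
  calc |⟪x, y⟫| ≤ ‖x‖ * ‖y‖ := abs_real_inner_le_norm x y
    _ = 1 := by rw [hX x hx, hX y hy, one_mul]

lemma coh_pos (hunit : IsUnitSet X) (hfin : X.Finite) (hcard : n < X.ncard) : 0 < coh X := by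
  by_contra! hle
  have horth : Orthonormal ℝ (Subtype.val : X → E n) :=
    ⟨fun x => hunit x x.2, fun x y hxy => abs_eq_zero.mp <| le_antisymm
      ((abs_inner_le_coh hfin x.2 y.2 (Subtype.coe_ne_coe.mpr hxy)).trans hle) (abs_nonneg _)⟩
  have := hfin.fintype
  have hle := horth.linearIndependent.fintype_card_le_finrank
  rw [finrank_euclideanSpace_fin, ← Nat.card_eq_fintype_card, Nat.card_coe_set_eq] at hle
  omega

lemma exists_isUnitSet_ncard_coh_lt {S : Set (E n)} (hS : IsUnitSet S) (hSfin : S.Finite)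
    {c : ℝ} (hc0 : 0 < c) (hc1 : c ≤ 1) (hSc : ∀ s ∈ S, ∀ s' ∈ S, s ≠ s' → |⟪s, s'⟫| ≤ c)
    {v : E n} (hv : ‖v‖ = 1) (hvS : ∀ s ∈ S, ⟪s, v⟫ = 0) :
    ∃ Z : Set (E n), IsUnitSet Z ∧ Z.Finite ∧ Z.ncard = S.ncard + 1 ∧ coh Z < c := by
  have := hSfin.to_subtype
  obtain ⟨g, hg, hgv, hgg⟩ := exists_tilted_family (f := ((↑) : S → E n)) hc0 (by linarith) hv
    (fun s => hS s s.2) (fun s => hvS s s.2)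
    (fun s s' h => hSc s s.2 s' s'.2 (Subtype.coe_ne_coe.mpr h))
  have hg_inj : Function.Injective g := fun s s' h => by
    by_contra hne
    exact ne_of_abs_inner_lt_one (hg s) ((hgg s s' hne).trans_le hc1) h
  have hv_notMem : v ∉ Set.range g := by
    rintro ⟨s, rfl⟩
    exact ne_of_abs_inner_lt_one (hg s) ((hgv s).trans_le hc1) rfl
  refine ⟨insert v (Set.range g), ?_, (Set.finite_range g).insert v, ?_, ?_⟩
  · rintro z (rfl | ⟨s, rfl⟩)
    exacts [hv, hg s]
  · rw [Set.ncard_insert_of_notMem hv_notMem (Set.finite_range g),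
      Set.ncard_range_of_injective hg_inj, Nat.card_coe_set_eq]
  · refine coh_lt_of_forall_abs_inner_lt ((Set.finite_range g).insert v) hc0 ?_
    rintro x (rfl | ⟨s, rfl⟩) y (rfl | ⟨s', rfl⟩) hxy
    · exact absurd rfl hxy
    · rw [real_inner_comm]
      exact hgv s'
    · exact hgv s
    · exact hgg s s' (ne_of_apply_ne g hxy)

end Coherence

theorem grassmannian_drop_one_spans {n m : ℕ} (hmn : n < m)
    (X : Set (E n)) (hX : Grassmannian m X) :
    ∀ x ∈ X, Submodule.span ℝ (X \ {x}) = ⊤ := by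
  obtain ⟨hunit, hfin, hcard, hopt⟩ := hX
  intro x hx
  by_contra hspan
  obtain ⟨v, hv, hvS⟩ := exists_norm_eq_one_forall_inner_eq_zero hspan
  obtain ⟨Z, hZunit, hZfin, hZcard, hZcoh⟩ := exists_isUnitSet_ncard_coh_lt
    (fun s hs => hunit s hs.1) hfin.sdiff (coh_pos hunit hfin (hcard ▸ hmn)) (coh_le_one hunit)
    (fun s hs s' hs' h => abs_inner_le_coh hfin hs.1 hs'.1 h) hv hvS
  rw [Set.ncard_sdiff_singleton_add_one hx hfin, hcard] at hZcard
  exact (hopt Z hZunit hZfin hZcard).not_gt hZcoh
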